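/- Let λ ∈ P_N with all entries positive only in weakly decreasing order, and define ℓ_i = λ_i - i. Then ∇(s_λ) = ∑_{i ∈ [N], λ - e_i ∈ P_N} (ℓ_i + N) s_{λ - e_i}, where s_λ = s_{λ/(0,...,0)} is the Schur polynomial. -/

import Mathlib

open MvPolynomial

/-- The complete homogeneous symmetric polynomial `h_n` in `N` variables,
with `h_n = 0` for `n < 0`. -/
noncomputable def hh (N : ℕ) (n : ℤ) : MvPolynomial (Fin N) ℤ :=
  if 0 ≤ n then ∑ d ∈ Finset.Nat.antidiagonalTuple N n.toNat, ∏ i, X i ^ d i else 0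

/-- The diagonal derivative `∇ = ∂/∂x_1 + ⋯ + ∂/∂x_N`. -/
noncomputable def nabla (N : ℕ) (f : MvPolynomial (Fin N) ℤ) : MvPolynomial (Fin N) ℤ :=
  ∑ i, pderiv i f

/-- `a ∈ P_N`: weakly decreasing tuples of nonnegative integers. -/
def IsPar {N : ℕ} (a : Fin N → ℤ) : Prop :=
  (∀ i j : Fin N, i ≤ j → a j ≤ a i) ∧ ∀ i, 0 ≤ a i

/-- The skew Schur polynomial, defined by the Jacobi–Trudi formula. -/
noncomputable def skewSchur (N : ℕ) (lam mu : Fin N → ℤ) : MvPolynomial (Fin N) ℤ :=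
  Matrix.det (Matrix.of fun i j : Fin N => hh N (lam i - mu j - (i : ℤ) + (j : ℤ)))

/-- The tuple `e_k` with `1` in position `k` and `0` elsewhere. -/
def ee {N : ℕ} (k : Fin N) : Fin N → ℤ := fun i => if i = k then 1 else 0

instance {N : ℕ} (a : Fin N → ℤ) : Decidable (IsPar a) := by unfold IsPar; infer_instance

/-!
`∇` is a derivation, so Jacobi's formula gives `∇ det A = ∑_l det A⁽ˡ⁾`, where `A⁽ˡ⁾` is `A` with
column `l` differentiated. Index rows and columns from `0`, so that the Jacobi–Trudi matrix is
`A_{kl} = h_{ℓ_k + l + 1}`. Since `∇ h_n = (n + N - 1) h_{n-1}`,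
`∇ A_{kl} = (ℓ_k + N) h_{ℓ_k + l} + l h_{ℓ_k + l}`. The second summand is `l` times column `l - 1`
of `A`, so it contributes nothing. In the first, `(h_{ℓ_k + l})_l` is row `k` of the Jacobi–Trudi
matrix of `λ - e_k`, and `tr (adj A * X) = tr (X * adj A)` turns the column expansion into a row
expansion, giving `∑_k (ℓ_k + N) s_{λ - e_k}`. When `λ - e_k ∉ P_N`, its Jacobi–Trudi matrix has two
equal rows or a zero last row, so `s_{λ - e_k} = 0`.
-/

namespace Derivation

theorem leibniz_prod {R A M ι : Type*} [CommSemiring R] [CommSemiring A] [AddCommMonoid M]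
    [Algebra R A] [Module A M] [Module R M] [DecidableEq ι] (D : Derivation R A M) (s : Finset ι)
    (f : ι → A) : D (∏ i ∈ s, f i) = ∑ i ∈ s, (∏ j ∈ s.erase i, f j) • D (f i) := by
  induction s using Finset.induction_on with
  | empty => simp
  | insert a s ha ih =>
    rw [Finset.prod_insert ha, leibniz, ih, Finset.sum_insert ha, Finset.erase_insert ha,
      Finset.smul_sum, add_comm]
    congr 1
    refine Finset.sum_congr rfl fun i hi => ?_
    rw [Finset.erase_insert_of_ne (ne_of_mem_of_not_mem hi ha).symm,
      Finset.prod_insert fun h => ha (Finset.mem_of_mem_erase h), smul_smul]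

theorem map_det {R A n : Type*} [CommRing R] [CommRing A] [Algebra R A] [Fintype n]
    [DecidableEq n] (D : Derivation R A A) (M : Matrix n n A) :
    D M.det = ∑ l, (M.updateCol l fun k => D (M k l)).det := by
  simp only [Matrix.det_apply', map_sum, Finset.sum_comm (γ := n)]
  refine Finset.sum_congr rfl fun σ _ => ?_
  rw [D.leibniz, D.leibniz_prod, D.map_intCast, smul_zero, add_zero, Finset.smul_sum]
  refine Finset.sum_congr rfl fun l _ => ?_
  have hcol : (fun i => M.updateCol l (fun k => D (M k l)) (σ i) i) =
      Function.update (fun i => M (σ i) i) l (D (M (σ l) l)) := by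
    ext i
    by_cases hil : i = l
    · subst hil
      simp
    · simp [hil]
  rw [hcol, Finset.prod_update_of_mem (Finset.mem_univ l), Finset.sdiff_singleton_eq_erase,
    smul_eq_mul, smul_eq_mul]
  ring

end Derivation

namespace Matrix

variable {n R : Type*} [Fintype n] [DecidableEq n] [CommRing R]

theorem det_updateCol_eq_adjugate_mul_apply (M X : Matrix n n R) (l : n) :
    (M.updateCol l fun k => X k l).det = (M.adjugate * X) l l := by
  rw [← cramer_apply, cramer_eq_adjugate_mulVec]
  rfl

theorem det_updateRow_eq_mul_adjugate_apply (M X : Matrix n n R) (k : n) :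
    (M.updateRow k (X k)).det = (X * M.adjugate) k k := by
  rw [← cramer_transpose_apply, cramer_eq_adjugate_mulVec, ← adjugate_transpose, mul_apply,
    mulVec, dotProduct]
  simp only [transpose_apply, mul_comm]

theorem sum_det_updateCol_eq_sum_det_updateRow (M X : Matrix n n R) :
    ∑ l, (M.updateCol l fun k => X k l).det = ∑ k, (M.updateRow k (X k)).det := by
  simp only [det_updateCol_eq_adjugate_mul_apply, det_updateRow_eq_mul_adjugate_apply]
  exact trace_mul_comm M.adjugate X

end Matrix

theorem MvPolynomial.prod_X_pow_eq_monomial_equivFunOnFinite {σ R : Type*} [Fintype σ]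
    [CommSemiring R] (d : σ → ℕ) :
    ∏ i, (X i : MvPolynomial σ R) ^ d i = monomial (Finsupp.equivFunOnFinite.symm d) 1 := by
  rw [prod_X_pow]
  congr
  ext i
  exact Finsupp.indicator_of_mem (Finset.mem_univ i) _

variable {N : ℕ}

theorem coeff_hh (n : ℤ) (m : Fin N →₀ ℕ) :
    coeff m (hh N n) = if (m.degree : ℤ) = n then 1 else 0 := by
  unfold hh
  by_cases hn : 0 ≤ n
  · have hmem : ⇑m ∈ Finset.Nat.antidiagonalTuple N n.toNat ↔ (m.degree : ℤ) = n := by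
      rw [Finset.Nat.mem_antidiagonalTuple, ← Finsupp.degree_eq_sum]
      omega
    simp only [if_pos hn, coeff_sum, prod_X_pow_eq_monomial_equivFunOnFinite, coeff_monomial,
      Equiv.symm_apply_eq]
    rw [Finset.sum_ite_eq']
    exact if_congr hmem rfl rfl
  · rw [if_neg hn, coeff_zero, if_neg]
    rintro rfl
    exact hn (Int.natCast_nonneg _)

theorem nabla_hh (n : ℤ) : nabla N (hh N n) = C (n + N - 1) * hh N (n - 1) := by
  ext m
  have hsum : ∑ i, ((m i : ℤ) + 1) = m.degree + N := by
    simp [Finset.sum_add_distrib, Finsupp.degree_eq_sum]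
  simp only [nabla, coeff_sum, coeff_pderiv, coeff_C_mul, coeff_hh, map_add,
    Finsupp.degree_single, Nat.cast_add, Nat.cast_one, ← Finset.mul_sum, hsum]
  by_cases h : (m.degree : ℤ) = n - 1
  · rw [if_pos (by omega), if_pos h]
    omega
  · rw [if_neg (by omega), if_neg h, zero_mul, mul_zero]

noncomputable def nablaDerivation (N : ℕ) :
    Derivation ℤ (MvPolynomial (Fin N) ℤ) (MvPolynomial (Fin N) ℤ) :=
  ∑ i, pderiv i

theorem nablaDerivation_apply (f : MvPolynomial (Fin N) ℤ) :
    nablaDerivation N f = nabla N f := by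
  simp [nablaDerivation, nabla, ← Derivation.coeFnAddMonoidHom_apply]

noncomputable def jacobiTrudi (N : ℕ) (a : Fin N → ℤ) :
    Matrix (Fin N) (Fin N) (MvPolynomial (Fin N) ℤ) :=
  Matrix.of fun i j => hh N (a i - i + j)

theorem skewSchur_zero (a : Fin N → ℤ) : skewSchur N a 0 = (jacobiTrudi N a).det := by
  simp [skewSchur, jacobiTrudi]

theorem jacobiTrudi_sub_ee (a : Fin N → ℤ) (k : Fin N) :
    jacobiTrudi N (a - ee k) =
      (jacobiTrudi N a).updateRow k fun j => hh N (a k - k + j - 1) := by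
  ext i j : 1
  rcases eq_or_ne i k with rfl | hik
  · simp [jacobiTrudi, ee]
    ring_nf
  · simp [jacobiTrudi, ee, hik]

theorem nabla_jacobiTrudi_apply (a : Fin N → ℤ) (k l : Fin N) :
    nabla N (jacobiTrudi N a k l) =
      C (a k - (k + 1) + N) * hh N (a k - k + l - 1) + C (l : ℤ) * hh N (a k - k + l - 1) := by
  rw [jacobiTrudi, Matrix.of_apply, nabla_hh, ← add_mul, ← C_add]
  ring_nf

theorem det_updateCol_jacobiTrudi_pred_eq_zero (a : Fin N → ℤ) {l : Fin N}
    (hl : (l : ℕ) ≠ 0) :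
    ((jacobiTrudi N a).updateCol l fun k => hh N (a k - k + l - 1)).det = 0 := by
  set l' : Fin N := ⟨l - 1, by omega⟩
  have hl' : l' ≠ l := Fin.ne_of_val_ne (by simp [l']; omega)
  refine Matrix.det_zero_of_column_eq hl' fun k => ?_
  rw [Matrix.updateCol_ne hl', Matrix.updateCol_self, jacobiTrudi, Matrix.of_apply]
  congr 1
  simp [l']
  omega

theorem nabla_det_jacobiTrudi (a : Fin N → ℤ) :
    nabla N (jacobiTrudi N a).det =
      ∑ k, C (a k - (k + 1) + N) * (jacobiTrudi N (a - ee k)).det := by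
  set A := jacobiTrudi N a
  set c : Fin N → MvPolynomial (Fin N) ℤ := fun k => C (a k - (k + 1) + N)
  set B : Fin N → Fin N → MvPolynomial (Fin N) ℤ := fun k l => hh N (a k - k + l - 1)
  have hcol (l : Fin N) : (A.updateCol l fun k => nablaDerivation N (A k l)) =
      A.updateCol l ((fun k => c k * B k l) + C (σ := Fin N) (l : ℤ) • fun k => B k l) := by
    congr 1
    ext k
    simp [nablaDerivation_apply, A, nabla_jacobiTrudi_apply, c, B]
  have hshift (l : Fin N) : C (l : ℤ) * (A.updateCol l fun k => B k l).det = 0 := by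
    by_cases hl : (l : ℕ) = 0
    · simp [hl]
    · exact mul_eq_zero_of_right _ (det_updateCol_jacobiTrudi_pred_eq_zero a hl)
  have hrow (k : Fin N) :
      (A.updateRow k fun l => c k * B k l).det = c k * (jacobiTrudi N (a - ee k)).det := by
    rw [jacobiTrudi_sub_ee, ← Matrix.det_updateRow_smul]
    rfl
  rw [← nablaDerivation_apply, Derivation.map_det]
  simp only [hcol, Matrix.det_updateCol_add, Matrix.det_updateCol_smul, hshift, add_zero]
  exact (Matrix.sum_det_updateCol_eq_sum_det_updateRow A (.of fun k l => c k * B k l)).trans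
    (Finset.sum_congr rfl fun k _ => hrow k)

theorem det_jacobiTrudi_eq_zero_of_succ (a : Fin N → ℤ) {k k' : Fin N}
    (hk : (k' : ℕ) = k + 1) (h : a k' = a k + 1) : (jacobiTrudi N a).det = 0 := by
  refine Matrix.det_zero_of_row_eq (i := k) (j := k') (Fin.ne_of_val_ne (by omega)) ?_
  ext j
  simp only [jacobiTrudi, Matrix.of_apply, h, hk]
  push_cast
  ring_nf

theorem det_jacobiTrudi_eq_zero_of_le (a : Fin N → ℤ) {k : Fin N} (h : a k + N ≤ k) :
    (jacobiTrudi N a).det = 0 := by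
  refine Matrix.det_eq_zero_of_row_eq_zero k fun j => ?_
  have hj := j.isLt
  rw [jacobiTrudi, Matrix.of_apply, hh, if_neg (by omega)]

theorem isPar_sub_ee {lam : Fin N → ℤ} (hlam : IsPar lam) {k : Fin N} (hpos : 0 < lam k)
    (hlt : ∀ j, k < j → lam j < lam k) : IsPar (lam - ee k) := by
  refine ⟨fun i j hij => ?_, fun i => ?_⟩ <;> simp only [Pi.sub_apply, ee]
  · rcases eq_or_lt_of_le hij with rfl | hij
    · rfl
    by_cases hi : i = k
    · subst hi
      have := hlt j hij
      rw [if_neg hij.ne', if_pos rfl]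
      omega
    · have := hlam.1 i j hij.le
      rw [if_neg hi]
      split_ifs <;> omega
  · have := hlam.2 i
    split_ifs with hi
    · subst hi
      omega
    · omega

theorem det_jacobiTrudi_sub_ee_eq_zero {lam : Fin N → ℤ} (hlam : IsPar lam) {k : Fin N}
    (hk : ¬IsPar (lam - ee k)) : (jacobiTrudi N (lam - ee k)).det = 0 := by
  by_cases hlast : (k : ℕ) + 1 < N
  · set k' : Fin N := ⟨k + 1, hlast⟩
    have hkk' : k < k' := Fin.lt_def.mpr (Nat.lt_succ_self k)
    rcases (hlam.1 k k' hkk'.le).eq_or_lt with heq | hlt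
    · refine det_jacobiTrudi_eq_zero_of_succ _ (k' := k') rfl ?_
      simp [ee, hkk'.ne', heq]
    · refine absurd (isPar_sub_ee hlam ((hlam.2 k').trans_lt hlt) fun j hj => ?_) hk
      exact (hlam.1 k' j (Fin.le_def.mpr hj)).trans_lt hlt
  · have hk0 : lam k = 0 := by
      by_contra hne
      refine hk (isPar_sub_ee hlam ((hlam.2 k).lt_of_ne' hne) fun j hj => ?_)
      have := j.isLt
      omega
    refine det_jacobiTrudi_eq_zero_of_le _ (k := k) ?_
    simp [ee, hk0]
    omega

theorem nabla_schur (N : ℕ) (lam : Fin N → ℤ) (hlam : IsPar lam) :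
    nabla N (skewSchur N lam 0) =
      ∑ i ∈ Finset.univ.filter (fun i : Fin N => IsPar (lam - ee i)),
        C ((lam i - ((i : ℤ) + 1)) + (N : ℤ)) * skewSchur N (lam - ee i) 0 := by
  have hvanish (k : Fin N) (_ : k ∈ Finset.univ)
      (hk : C (lam k - (k + 1) + N) * skewSchur N (lam - ee k) 0 ≠ 0) : IsPar (lam - ee k) := by
    by_contra hpar
    rw [skewSchur_zero, det_jacobiTrudi_sub_ee_eq_zero hlam hpar, mul_zero] at hk
    exact hk rfl
  rw [Finset.sum_filter_of_ne hvanish, skewSchur_zero, nabla_det_jacobiTrudi]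
  simp only [skewSchur_zero]
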